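/- Bialternant formula for factorial Schur functions: s_μ(x|y) = a_{μ+ρ}(x|y) / a_ρ(x|y), where a_ξ(x|y) = det[(x_j|y)^{ξ_i}]_{1≤i,j≤d} and (x_j|y)^k = (x_j - y_1)···(x_j - y_k), and ρ = (d-1, d-2, ..., 0). -/

import Mathlib

open scoped Classical
open MvPolynomial

noncomputable section

namespace EqLR

/-- Ambient polynomial ring `ℂ[x_1,…,x_d ; y_i (i ∈ ℤ)]`.
The variables `x_j` are indexed by `Fin d` (so `x_{j+1} = X (Sum.inl j)`), and the
variables `y_i` are indexed by `ℤ` (only positive indices actually occur). -/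
abbrev P (d : ℕ) := MvPolynomial (Fin d ⊕ ℤ) ℂ

/-- The variable `y_i`. -/
def yI (d : ℕ) (i : ℤ) : P d := X (Sum.inr i)

/-- The variable `x_v` for a value `v ∈ {1,…,d}` (junk value `0` otherwise). -/
def xv (d : ℕ) (v : ℕ) : P d :=
  if h : v - 1 < d then X (Sum.inl ⟨v - 1, h⟩) else 0

/-- The component `ξ_v` of a vector `ξ ∈ ℕ^d`, for a (1-based) value `v ∈ {1,…,d}`. -/
def vecAt {d : ℕ} (ξ : Fin d → ℕ) (v : ℕ) : ℕ :=
  if h : v - 1 < d then ξ ⟨v - 1, h⟩ else 0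

/-- `μ ∈ ℕ^d` is a partition:  `μ_1 ≥ μ_2 ≥ … ≥ μ_d`. -/
def IsPartitionVec {d : ℕ} (μ : Fin d → ℕ) : Prop :=
  ∀ i j : Fin d, i ≤ j → μ j ≤ μ i

/-- `|μ| = μ_1 + ⋯ + μ_d`. -/
def wt {d : ℕ} (μ : Fin d → ℕ) : ℕ := ∑ i, μ i

/-- `ρ = (d-1, d-2, …, 0)`. -/
def rho (d : ℕ) : Fin d → ℕ := fun i => d - 1 - (i : ℕ)

/-- Cells `(r, c)` (both 0-based) of the Young/reverse Young diagram whose row `r` has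
length `μ_{r+1}`.  For the reverse diagram, rows are numbered bottom-to-top and columns
right-to-left; for the ordinary Young diagram, top-to-bottom and left-to-right. -/
def cells (d : ℕ) (μ : Fin d → ℕ) : Finset (ℕ × ℕ) :=
  (Finset.range d ×ˢ Finset.range (Finset.univ.sup μ + 1)).filter
    fun rc => ∃ h : rc.1 < d, rc.2 < μ ⟨rc.1, h⟩

/-- In the column reading word of a *reverse* diagram (columns right-to-left, i.e. in
increasing 0-based column index, each column read top-to-bottom, i.e. in decreasing
0-based row index), the cell `b` is read strictly before the cell `a`. -/
def revBefore (a b : ℕ × ℕ) : Prop := b.2 < a.2 ∨ (b.2 = a.2 ∧ a.1 < b.1)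

/-- In the column reading word of an ordinary Young diagram (rightmost column first,
each column read top-to-bottom), the cell `b` is read strictly before the cell `a`. -/
def youngBefore (a b : ℕ × ℕ) : Prop := a.2 < b.2 ∨ (b.2 = a.2 ∧ b.1 < a.1)

/-- A reverse tableau of shape `μ`: entries in `{1,…,d}`, weakly increasing along rows
(left to right) and strictly increasing down columns (top to bottom). -/
structure RevTableau (d : ℕ) (μ : Fin d → ℕ) where
  val : ℕ × ℕ → ℕ
  mem : ∀ a ∈ cells d μ, 1 ≤ val a ∧ val a ≤ d
  zero : ∀ a ∉ cells d μ, val a = 0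
  row : ∀ r c : ℕ, (r, c + 1) ∈ cells d μ → val (r, c + 1) ≤ val (r, c)
  col : ∀ r c : ℕ, (r + 1, c) ∈ cells d μ → val (r + 1, c) < val (r, c)

/-- The factor `x_v - y_{(d+1-v) + c(a) - r(a)}` attached to an entry of value `v` in
the cell `a` of the reverse diagram (`c(a) = a.2 + 1`, `r(a) = a.1 + 1`, 1-based). -/
def factor (d : ℕ) (v : ℕ) (a : ℕ × ℕ) : P d :=
  xv d v - yI d ((d : ℤ) + 1 - (v : ℤ) + (a.2 : ℤ) - (a.1 : ℤ))

/-- The factorial Schur function `s_μ(x|y) = Σ_R (x|y)^R`. -/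
def fSchur (d : ℕ) (μ : Fin d → ℕ) : P d :=
  ∑ᶠ R : RevTableau d μ, ∏ a ∈ cells d μ, factor d (R.val a) a

/-- The ordinary Schur function `s_μ(x) = Σ_R x^R`. -/
def schurX (d : ℕ) (μ : Fin d → ℕ) : P d :=
  ∑ᶠ R : RevTableau d μ, ∏ a ∈ cells d μ, xv d (R.val a)

/-- The subalgebra `ℂ[y]` of polynomials in the `y` variables only. -/
def ySub (d : ℕ) : Subalgebra ℂ (P d) :=
  Algebra.adjoin ℂ (Set.range fun i : ℤ => yI d i)

/-- `p` is symmetric in the `x` variables. -/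
def SymmX {d : ℕ} (p : P d) : Prop :=
  ∀ σ : Equiv.Perm (Fin d), rename (⇑(Equiv.sumCongr σ (Equiv.refl ℤ))) p = p

/-- The falling factorial power `(x_j | y)^k = (x_j - y_1)⋯(x_j - y_k)`. -/
def ffPow (d : ℕ) (j : Fin d) (k : ℕ) : P d :=
  ∏ i ∈ Finset.range k, (X (Sum.inl j) - yI d ((i : ℤ) + 1))

/-- `(x|y)^ξ = (x_1|y)^{ξ_1} ⋯ (x_d|y)^{ξ_d}`. -/
def xyPow (d : ℕ) (ξ : Fin d → ℕ) : P d := ∏ j : Fin d, ffPow d j (ξ j)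

/-- The alternant `a_ξ(x|y) = det[(x_j|y)^{ξ_i}]`. -/
def aDet (d : ℕ) (ξ : Fin d → ℕ) : P d :=
  Matrix.det (Matrix.of fun i j : Fin d => ffPow d j (ξ i))

/-! ### Skew barred tableaux of shape `λ*μ` -/

/-- A skew barred tableau of shape `λ*μ`: the Young diagram `λ` (placed above and to
the right of the reverse diagram `μ`) is filled with values in `{1,…,d}` (field `top`),
the reverse diagram `μ` is filled with values in `{1,…,d}` (field `bot`), some of whose
cells may be barred (field `barred`); values weakly increase along rows left-to-right
and strictly increase down columns, ignoring bars. -/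
structure SkewBarredTableau (d : ℕ) (lam mu : Fin d → ℕ) where
  top : ℕ × ℕ → ℕ
  bot : ℕ × ℕ → ℕ
  barred : ℕ × ℕ → Prop
  top_mem : ∀ a ∈ cells d lam, 1 ≤ top a ∧ top a ≤ d
  top_zero : ∀ a ∉ cells d lam, top a = 0
  bot_mem : ∀ a ∈ cells d mu, 1 ≤ bot a ∧ bot a ≤ d
  bot_zero : ∀ a ∉ cells d mu, bot a = 0
  barred_sub : ∀ a, barred a → a ∈ cells d mu
  top_row : ∀ r c : ℕ, (r, c + 1) ∈ cells d lam → top (r, c) ≤ top (r, c + 1)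
  top_col : ∀ r c : ℕ, (r + 1, c) ∈ cells d lam → top (r, c) < top (r + 1, c)
  bot_row : ∀ r c : ℕ, (r, c + 1) ∈ cells d mu → bot (r, c + 1) ≤ bot (r, c)
  bot_col : ∀ r c : ℕ, (r + 1, c) ∈ cells d mu → bot (r + 1, c) < bot (r, c)

namespace SkewBarredTableau

variable {d : ℕ} {lam mu : Fin d → ℕ}

/-- `ω(L^u_{<a})_k`: the number of `k`'s among the unbarred entries of `L` read strictly
before the `μ`-cell `a` in the unbarred column word (all of `λ` is read before `μ`). -/
def countBefore (L : SkewBarredTableau d lam mu) (a : ℕ × ℕ) (k : ℕ) : ℕ :=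
  ((cells d lam).filter fun b => L.top b = k).card +
  ((cells d mu).filter fun b => ¬ L.barred b ∧ L.bot b = k ∧ revBefore a b).card

/-- `ω(L^u_{≤a})_k`: as `countBefore`, but the entry of `a` itself is also counted when
`a` is unbarred. -/
def countUpTo (L : SkewBarredTableau d lam mu) (a : ℕ × ℕ) (k : ℕ) : ℕ :=
  ((cells d lam).filter fun b => L.top b = k).card +
  ((cells d mu).filter fun b => ¬ L.barred b ∧ L.bot b = k ∧ (revBefore a b ∨ b = a)).card

/-- Prefix content within the `λ`-part of the word. -/
def topCountUpTo (L : SkewBarredTableau d lam mu) (a : ℕ × ℕ) (k : ℕ) : ℕ :=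
  ((cells d lam).filter fun b => L.top b = k ∧ (youngBefore a b ∨ b = a)).card

/-- `ω(L^u)_k`: total content of the unbarred column word of `L`. -/
def content (L : SkewBarredTableau d lam mu) (k : ℕ) : ℕ :=
  ((cells d lam).filter fun b => L.top b = k).card +
  ((cells d mu).filter fun b => ¬ L.barred b ∧ L.bot b = k).card

/-- The unbarred column word of `L` is Yamanouchi: every prefix contains at least as
many `k`'s as `(k+1)`'s, for every `k ≥ 1`. -/
def Yamanouchi (L : SkewBarredTableau d lam mu) : Prop :=
  (∀ a ∈ cells d lam, ∀ k : ℕ, 1 ≤ k → L.topCountUpTo a (k + 1) ≤ L.topCountUpTo a k) ∧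
  (∀ a ∈ cells d mu, ¬ L.barred a → ∀ k : ℕ, 1 ≤ k →
      L.countUpTo a (k + 1) ≤ L.countUpTo a k)

/-- `L` is an equivariant Littlewood–Richardson skew tableau of shape `λ*μ` and unbarred
content `ν`. -/
def IsLR (L : SkewBarredTableau d lam mu) (ν : Fin d → ℕ) : Prop :=
  L.Yamanouchi ∧ ∀ i : Fin d, L.content ((i : ℕ) + 1) = ν i

/-- The index `|a|' + ω(L^u_{<a})_{|a|}` of the first `y` in the factor of `c_L` at a
barred cell `a`. -/
def eIdx (L : SkewBarredTableau d lam mu) (a : ℕ × ℕ) : ℤ :=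
  ((d : ℤ) + 1 - (L.bot a : ℤ)) + (L.countBefore a (L.bot a) : ℤ)

/-- The index `|a|' + c(a) - r(a)` of the second `y` in the factor of `c_L` at a barred
cell `a`. -/
def fIdx (L : SkewBarredTableau d lam mu) (a : ℕ × ℕ) : ℤ :=
  ((d : ℤ) + 1 - (L.bot a : ℤ)) + (a.2 : ℤ) - (a.1 : ℤ)

/-- The weight `c_L = ∏_{a barred} (y_{|a|'+ω(L^u_{<a})_{|a|}} - y_{|a|'+c(a)-r(a)})`. -/
def cWt (L : SkewBarredTableau d lam mu) : P d :=
  ∏ a ∈ (cells d mu).filter (fun a => L.barred a), (yI d (L.eIdx a) - yI d (L.fIdx a))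

/-- `Δ(a) = ω(L^u_{≤a})_{|a|} - c(a) + r(a)`. -/
def Δ (L : SkewBarredTableau d lam mu) (a : ℕ × ℕ) : ℤ :=
  (L.countUpTo a (L.bot a) : ℤ) - ((a.2 : ℤ) + 1) + ((a.1 : ℤ) + 1)

end SkewBarredTableau

/-! ### Reverse barred tableaux -/

/-- A reverse barred tableau of shape `μ`. -/
structure RevBarredTableau (d : ℕ) (μ : Fin d → ℕ) where
  val : ℕ × ℕ → ℕ
  barred : ℕ × ℕ → Prop
  mem : ∀ a ∈ cells d μ, 1 ≤ val a ∧ val a ≤ d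
  zero : ∀ a ∉ cells d μ, val a = 0
  barred_sub : ∀ a, barred a → a ∈ cells d μ
  row : ∀ r c : ℕ, (r, c + 1) ∈ cells d μ → val (r, c + 1) ≤ val (r, c)
  col : ∀ r c : ℕ, (r + 1, c) ∈ cells d μ → val (r + 1, c) < val (r, c)

namespace RevBarredTableau

variable {d : ℕ} {μ : Fin d → ℕ}

/-- `ω(B^u_{<a})_k`. -/
def countBefore (B : RevBarredTableau d μ) (a : ℕ × ℕ) (k : ℕ) : ℕ :=
  ((cells d μ).filter fun b => ¬ B.barred b ∧ B.val b = k ∧ revBefore a b).card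

/-- `ω(B^u_{≤a})_k` (including `a` itself when unbarred). -/
def countUpTo (B : RevBarredTableau d μ) (a : ℕ × ℕ) (k : ℕ) : ℕ :=
  ((cells d μ).filter fun b => ¬ B.barred b ∧ B.val b = k ∧ (revBefore a b ∨ b = a)).card

/-- `ω(B^u)_k`. -/
def content (B : RevBarredTableau d μ) (k : ℕ) : ℕ :=
  ((cells d μ).filter fun b => ¬ B.barred b ∧ B.val b = k).card

/-- `e_{ξ,B}(a) = (ξ + ω(B^u_{<a}))_{|a|}`. -/
def eIdx (B : RevBarredTableau d μ) (ξ : Fin d → ℕ) (a : ℕ × ℕ) : ℤ :=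
  (vecAt ξ (B.val a) : ℤ) + (B.countBefore a (B.val a) : ℤ)

/-- `f_B(a) = |a|' + c(a) - r(a)`. -/
def fIdx (B : RevBarredTableau d μ) (a : ℕ × ℕ) : ℤ :=
  ((d : ℤ) + 1 - (B.val a : ℤ)) + (a.2 : ℤ) - (a.1 : ℤ)

/-- `c_{ξ,B} = ∏_{a barred} (y_{e_{ξ,B}(a)} - y_{f_B(a)})`. -/
def cXi (B : RevBarredTableau d μ) (ξ : Fin d → ℕ) : P d :=
  ∏ a ∈ (cells d μ).filter (fun a => B.barred a), (yI d (B.eIdx ξ a) - yI d (B.fIdx a))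

/-- The unbarred column word of `λ*B` is Yamanouchi (the `λ`-part is the canonical
filling of `λ`, whose whole content `λ` is added to every prefix of `B^u`). -/
def StarYam (B : RevBarredTableau d μ) (lam : Fin d → ℕ) : Prop :=
  ∀ a ∈ cells d μ, ¬ B.barred a → ∀ k : ℕ, 1 ≤ k →
    vecAt lam (k + 1) + B.countUpTo a (k + 1) ≤ vecAt lam k + B.countUpTo a k

end RevBarredTableau

/-! ### Reverse hatted tableaux -/

/-- A hat decoration: none, left hat, or right hat. -/
inductive Hat where
  | unhatted : Hat
  | left : Hat
  | right : Hat
deriving DecidableEq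

/-- A reverse hatted tableau of shape `μ`. -/
structure RevHattedTableau (d : ℕ) (μ : Fin d → ℕ) where
  val : ℕ × ℕ → ℕ
  hat : ℕ × ℕ → Hat
  mem : ∀ a ∈ cells d μ, 1 ≤ val a ∧ val a ≤ d
  zero : ∀ a ∉ cells d μ, val a = 0
  hat_out : ∀ a ∉ cells d μ, hat a = Hat.unhatted
  row : ∀ r c : ℕ, (r, c + 1) ∈ cells d μ → val (r, c + 1) ≤ val (r, c)
  col : ∀ r c : ℕ, (r + 1, c) ∈ cells d μ → val (r + 1, c) < val (r, c)

namespace RevHattedTableau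

variable {d : ℕ} {μ : Fin d → ℕ}

/-- `ω(H^u_{<a})_k`: content of the unhatted column word of `H` read before `a`. -/
def countBefore (H : RevHattedTableau d μ) (a : ℕ × ℕ) (k : ℕ) : ℕ :=
  ((cells d μ).filter fun b => H.hat b = Hat.unhatted ∧ H.val b = k ∧ revBefore a b).card

/-- `ω(H^u)_k`. -/
def content (H : RevHattedTableau d μ) (k : ℕ) : ℕ :=
  ((cells d μ).filter fun b => H.hat b = Hat.unhatted ∧ H.val b = k).card

/-- `e_{ξ,H}(a) = (ξ + ω(H^u_{<a}))_{|a|}`. -/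
def eIdx (H : RevHattedTableau d μ) (ξ : Fin d → ℕ) (a : ℕ × ℕ) : ℤ :=
  (vecAt ξ (H.val a) : ℤ) + (H.countBefore a (H.val a) : ℤ)

/-- `f_H(a) = |a|' + c(a) - r(a)`. -/
def fIdx (H : RevHattedTableau d μ) (a : ℕ × ℕ) : ℤ :=
  ((d : ℤ) + 1 - (H.val a : ℤ)) + (a.2 : ℤ) - (a.1 : ℤ)

/-- `d_{ξ,H} = ∏_{a ∈ H^l} y_{e_{ξ,H}(a)} · ∏_{a ∈ H^r} (-y_{f_H(a)})`. -/
def dWt (H : RevHattedTableau d μ) (ξ : Fin d → ℕ) : P d :=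
  (∏ a ∈ (cells d μ).filter (fun a => H.hat a = Hat.left), yI d (H.eIdx ξ a)) *
  ∏ a ∈ (cells d μ).filter (fun a => H.hat a = Hat.right), (-(yI d (H.fIdx a)))

end RevHattedTableau

/-- `H̄ = B`: `H` unbars to the reverse barred tableau `B`. -/
def UnbarsTo {d : ℕ} {μ : Fin d → ℕ} (H : RevHattedTableau d μ)
    (B : RevBarredTableau d μ) : Prop :=
  H.val = B.val ∧ ∀ a, (H.hat a ≠ Hat.unhatted ↔ B.barred a)

/-- The simple transposition `σ_i` on values: exchanges `i` and `i+1`. -/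
def swapVal (i v : ℕ) : ℕ := if v = i then i + 1 else if v = i + 1 then i else v

/-- The action of `σ_i` on `ℕ^d` by permuting coordinates. -/
def swapVec {d : ℕ} (i : ℕ) (ξ : Fin d → ℕ) : Fin d → ℕ :=
  fun j => vecAt ξ (swapVal i ((j : ℕ) + 1))

/-! ### Reverse (barred) subtableaux -/

/-- A reverse subtableau of shape `μ`: each cell is empty (value `0`) or carries a value
in `{1,…,d}`; no row or column conditions. -/
structure RevSubTableau (d : ℕ) (μ : Fin d → ℕ) where
  val : ℕ × ℕ → ℕ
  mem : ∀ a ∈ cells d μ, val a ≤ d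
  zero : ∀ a ∉ cells d μ, val a = 0

/-- A reverse barred subtableau of shape `μ`: a reverse subtableau some of whose filled
cells are barred. -/
structure RevBarredSubTableau (d : ℕ) (μ : Fin d → ℕ) where
  val : ℕ × ℕ → ℕ
  barred : ℕ × ℕ → Prop
  mem : ∀ a ∈ cells d μ, val a ≤ d
  zero : ∀ a ∉ cells d μ, val a = 0
  barred_filled : ∀ a, barred a → a ∈ cells d μ ∧ val a ≠ 0

/-- `(x|y)^R` for a reverse subtableau `R`. -/
def RevSubTableau.xyProd {d : ℕ} {μ : Fin d → ℕ} (R : RevSubTableau d μ) : P d :=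
  ∏ a ∈ (cells d μ).filter (fun a => R.val a ≠ 0), factor d (R.val a) a

namespace RevBarredSubTableau

variable {d : ℕ} {μ : Fin d → ℕ}

/-- `ω(B^u_{<a})_k`: unbarred filled entries of value `k` read before `a`. -/
def countBefore (B : RevBarredSubTableau d μ) (a : ℕ × ℕ) (k : ℕ) : ℕ :=
  ((cells d μ).filter fun b => ¬ B.barred b ∧ B.val b = k ∧ revBefore a b).card

/-- `ω(B^u)_k`. -/
def content (B : RevBarredSubTableau d μ) (k : ℕ) : ℕ :=
  ((cells d μ).filter fun b => ¬ B.barred b ∧ B.val b = k).card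

/-- `e_{ξ,B}(a) = (ξ + ω(B^u_{<a}))_{|a|}`. -/
def eIdx (B : RevBarredSubTableau d μ) (ξ : Fin d → ℕ) (a : ℕ × ℕ) : ℤ :=
  (vecAt ξ (B.val a) : ℤ) + (B.countBefore a (B.val a) : ℤ)

/-- `f_B(a) = |a|' + c(a) - r(a)`. -/
def fIdx (B : RevBarredSubTableau d μ) (a : ℕ × ℕ) : ℤ :=
  ((d : ℤ) + 1 - (B.val a : ℤ)) + (a.2 : ℤ) - (a.1 : ℤ)

/-- `c_{ξ,B}`. -/
def cXi (B : RevBarredSubTableau d μ) (ξ : Fin d → ℕ) : P d :=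
  ∏ a ∈ (cells d μ).filter (fun a => B.barred a), (yI d (B.eIdx ξ a) - yI d (B.fIdx a))

end RevBarredSubTableau

end EqLR

/-!
Both sides of the identity obey the same branching rule in the first variable `x₁`, so the
theorem follows by induction on `d`.

The entries `1` of a reverse tableau of shape `μ` fill a horizontal strip `μ/λ` at the ends of
the rows, where `λ` interlaces `μ` (`μ_{i+1} ≤ λ_i ≤ μ_i`, `λ_d = 0`); lowering the remaining
entries by one gives a reverse tableau of shape `λ` in `x₂, …, x_d`. Hence
`s_μ(x|y) = ∑_λ Φ_{μ/λ} · s_λ(x₂, …, x_d | y)` with `Φ_{μ/λ}` a product of factors `x₁ - y_k`.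

In `a_{μ+ρ}(x|y)`, subtracting from each row a suitable multiple of the next one clears the first
column except for its last entry, and the remaining entries become `(x₁ - x_j)` times a
telescoping sum of falling factorial powers of `x_j`. Expanding the determinant multilinearly
over these sums gives `a_{μ+ρ} = ∑_λ Φ_{μ/λ} · ∏_{j>1} (x₁ - x_j) · a_{λ+ρ}(x₂, …, x_d | y)`
over the same `λ`; for `μ = 0` this reads `a_ρ = ∏_{j>1} (x₁ - x_j) · a_ρ(x₂, …, x_d | y)`.
-/

open Finset Matrix

theorem lt_card_filter_range_iff {p : ℕ → Prop} [DecidablePred p] {m : ℕ}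
    (hp : ∀ c c', c ≤ c' → c' < m → p c' → p c) (c : ℕ) :
    c < #{c' ∈ range m | p c'} ↔ c < m ∧ p c := by
  constructor
  · intro hc
    by_contra h
    have hsub : {c' ∈ range m | p c'} ⊆ range c := fun z hz => by
      simp only [mem_filter, mem_range] at hz ⊢
      by_contra hcz
      exact h ⟨by omega, hp c z (by omega) hz.1 hz.2⟩
    exact absurd (card_le_card hsub) (by simpa using hc)
  · rintro ⟨hcm, hpc⟩
    have hsub : range (c + 1) ⊆ {c' ∈ range m | p c'} := fun z hz => by
      simp only [mem_filter, mem_range] at hz ⊢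
      exact ⟨by omega, hp z c (by omega) hcm hpc⟩
    simpa using card_le_card hsub

section FallingFactorial

variable {R : Type*} [CommRing R]

theorem sub_mul_sum_prod_Ico_mul_prod_range (y : ℕ → R) (u v : R) {a b : ℕ} (hab : a ≤ b) :
    (u - v) * ∑ s ∈ Ico a b, (∏ t ∈ Ico (s + 1) b, (u - y t)) * ∏ t ∈ range s, (v - y t) =
      (∏ t ∈ Ico a b, (u - y t)) * ∏ t ∈ range a, (v - y t) - ∏ t ∈ range b, (v - y t) := by
  induction hab using Nat.decreasingInduction with
  | self => simp
  | of_succ a hab ih =>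
    rw [sum_eq_sum_Ico_succ_bot hab, prod_eq_prod_Ico_succ_bot hab, mul_add, ih, prod_range_succ]
    ring

theorem det_of_sum_mul_eq_sum_piFinset {m κ : Type*} [Fintype m] [DecidableEq m] (A : m → Finset κ)
    (c : m → κ → R) (f : m → κ → m → R) :
    det (of fun i j => ∑ k ∈ A i, c i k * f i k j) =
      ∑ p ∈ Fintype.piFinset A, (∏ i, c i (p i)) * det (of fun i j => f i (p i) j) := by
  have hrows : (of fun i j => ∑ k ∈ A i, c i k * f i k j) = fun i => ∑ k ∈ A i, c i k • f i k := by
    ext i j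
    simp [Finset.sum_apply]
  change detRowAlternating _ = _
  rw [hrows, ← AlternatingMap.coe_multilinearMap, MultilinearMap.map_sum_finset]
  refine sum_congr rfl fun p _ => ?_
  rw [MultilinearMap.map_smul_univ, smul_eq_mul]
  rfl

theorem det_falling_eq_mul_det {n : ℕ} (y : ℕ → R) (x : Fin (n + 1) → R) (ξ : Fin (n + 1) → ℕ)
    (hξ : ∀ i : Fin n, ξ i.succ ≤ ξ i.castSucc) :
    det (of fun i j => ∏ t ∈ range (ξ i), (x j - y t)) =
      (∏ t ∈ range (ξ (Fin.last n)), (x 0 - y t)) * (∏ j : Fin n, (x 0 - x j.succ)) *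
        det (of fun i j : Fin n => ∑ s ∈ Ico (ξ i.succ) (ξ i.castSucc),
          (∏ t ∈ Ico (s + 1) (ξ i.castSucc), (x 0 - y t)) * ∏ t ∈ range s, (x j.succ - y t)) := by
  set A : Matrix (Fin (n + 1)) (Fin (n + 1)) R := of fun i j => ∏ t ∈ range (ξ i), (x j - y t)
  set D : Matrix (Fin n) (Fin n) R := of fun i j => ∑ s ∈ Ico (ξ i.succ) (ξ i.castSucc),
    (∏ t ∈ Ico (s + 1) (ξ i.castSucc), (x 0 - y t)) * ∏ t ∈ range s, (x j.succ - y t)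
  set c : Fin n → R := fun i => ∏ t ∈ Ico (ξ i.succ) (ξ i.castSucc), (x 0 - y t)
  -- subtracting `c i` times row `i + 1` from row `i` clears column `0` above the last row
  set B : Matrix (Fin (n + 1)) (Fin (n + 1)) R := of fun i j =>
    Fin.lastCases (motive := fun _ => R) (A (Fin.last n) j)
      (fun i => A i.castSucc j - c i * A i.succ j) i
  have hAB : det A = det B := by
    have := det_eq_of_forall_row_eq_smul_add_pred (A := A.submatrix Fin.revPerm Fin.revPerm)
      (B := B.submatrix Fin.revPerm Fin.revPerm) (fun i => c i.rev) (fun j => by simp [B])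
      (fun i j => by simp [B, Fin.rev_succ, Fin.rev_castSucc])
    rwa [det_submatrix_equiv_self, det_submatrix_equiv_self] at this
  have hB0 : ∀ i : Fin n, B i.castSucc 0 = 0 := fun i => by
    simp only [B, A, c, of_apply, Fin.lastCases_castSucc]
    rw [← prod_range_mul_prod_Ico _ (hξ i)]
    ring
  have hminor : B.submatrix (Fin.last n).succAbove Fin.succ =
      -of fun i j => (x 0 - x j.succ) * D i j := by
    ext i j
    simp only [B, A, c, D, submatrix_apply, Fin.succAbove_last, of_apply, Fin.lastCases_castSucc,
      Matrix.neg_apply]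
    rw [sub_mul_sum_prod_Ico_mul_prod_range y _ _ (hξ i)]
    ring
  rw [hAB, det_succ_column_zero, Fin.sum_univ_castSucc, sum_eq_zero fun i _ => by rw [hB0]; ring,
    hminor, det_neg, det_mul_row]
  simp only [B, A, of_apply, Fin.lastCases_last, Fintype.card_fin, Fin.val_last, zero_add]
  have hsign : (-1 : R) ^ n * (-1) ^ n = 1 := by rw [← mul_pow]; norm_num
  linear_combination (∏ t ∈ range (ξ (Fin.last n)), (x 0 - y t)) *
    (∏ j : Fin n, (x 0 - x j.succ)) * det D * hsign

end FallingFactorial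

namespace EqLR

lemma mem_cells_iff {d : ℕ} {μ : Fin d → ℕ} {r c : ℕ} :
    (r, c) ∈ cells d μ ↔ ∃ h : r < d, c < μ ⟨r, h⟩ := by
  simp only [cells, mem_filter, mem_product, mem_range]
  exact ⟨fun h => h.2, fun ⟨hr, hc⟩ =>
    ⟨⟨hr, Nat.lt_succ_of_lt (hc.trans_le (le_sup (mem_univ _)))⟩, hr, hc⟩⟩

lemma mem_cells_fin {d : ℕ} {μ : Fin d → ℕ} (i : Fin d) (c : ℕ) :
    ((i : ℕ), c) ∈ cells d μ ↔ c < μ i := by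
  simp [mem_cells_iff]

lemma mem_cells_castSucc {n : ℕ} {μ : Fin (n + 1) → ℕ} (i : Fin n) (c : ℕ) :
    ((i : ℕ), c) ∈ cells (n + 1) μ ↔ c < μ i.castSucc := by
  simpa using mem_cells_fin (μ := μ) i.castSucc c

lemma mem_cells_of_le {d : ℕ} {μ : Fin d → ℕ} {r c c' : ℕ} (h : (r, c) ∈ cells d μ)
    (hc : c' ≤ c) : (r, c') ∈ cells d μ := by
  obtain ⟨hr, hc'⟩ := mem_cells_iff.mp h
  exact mem_cells_iff.mpr ⟨hr, hc.trans_lt hc'⟩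

lemma IsPartitionVec.mem_cells_of_succ {d : ℕ} {μ : Fin d → ℕ} (hμ : IsPartitionVec μ)
    {r c : ℕ} (h : (r + 1, c) ∈ cells d μ) : (r, c) ∈ cells d μ := by
  obtain ⟨hr, hc⟩ := mem_cells_iff.mp h
  exact mem_cells_iff.mpr ⟨by omega, hc.trans_le (hμ _ _ (Fin.le_def.mpr (Nat.le_succ r)))⟩

lemma prod_cells {d : ℕ} {μ : Fin d → ℕ} {M : Type*} [CommMonoid M] (f : ℕ × ℕ → M) :
    ∏ a ∈ cells d μ, f a = ∏ i : Fin d, ∏ c ∈ range (μ i), f (i, c) := by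
  have hcells : cells d μ = (univ.sigma fun i => range (μ i)).map
      ((Equiv.sigmaEquivProd (Fin d) ℕ).toEmbedding.trans
        (Function.Embedding.prodMap Fin.valEmbedding (Function.Embedding.refl ℕ))) := by
    ext ⟨r, c⟩
    simp only [mem_map, mem_sigma, mem_univ, mem_range, true_and, Sigma.exists, mem_cells_iff]
    constructor
    · rintro ⟨hr, hc⟩
      exact ⟨⟨r, hr⟩, c, hc, rfl⟩
    · rintro ⟨i, c', hc, h⟩
      simp only [Function.Embedding.trans_apply, Equiv.coe_toEmbedding, Equiv.sigmaEquivProd_apply,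
        Function.Embedding.coe_prodMap, Prod.map, Fin.valEmbedding_apply,
        Function.Embedding.refl_apply, Prod.mk.injEq] at h
      obtain ⟨rfl, rfl⟩ := h
      exact ⟨i.isLt, hc⟩
  rw [hcells, prod_map, prod_sigma]
  rfl

namespace RevTableau

variable {d : ℕ} {μ : Fin d → ℕ}

lemma val_injective : Function.Injective (val : RevTableau d μ → ℕ × ℕ → ℕ) := by
  rintro ⟨v, _, _, _, _⟩ ⟨w, _, _, _, _⟩ (rfl : v = w)
  rfl

instance : Finite (RevTableau d μ) :=
  Finite.of_injective
    (fun T (a : cells d μ) => (⟨T.val a, Nat.lt_succ_of_le (T.mem a a.2).2⟩ : Fin (d + 1)))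
    fun T S h => val_injective <| funext fun a => by
      by_cases ha : a ∈ cells d μ
      · simpa using congrFun h ⟨a, ha⟩
      · rw [T.zero a ha, S.zero a ha]

instance : Fintype (RevTableau d μ) := Fintype.ofFinite _

lemma val_le_of_le (T : RevTableau d μ) {r c c' : ℕ} (h : (r, c) ∈ cells d μ) (hc : c' ≤ c) :
    T.val (r, c) ≤ T.val (r, c') := by
  induction c, hc using Nat.le_induction with
  | base => exact le_rfl
  | succ c _ ih => exact (T.row r c h).trans (ih (mem_cells_of_le h c.le_succ))

lemma val_add_le (hμ : IsPartitionVec μ) (T : RevTableau d μ) {r c : ℕ}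
    (h : (r, c) ∈ cells d μ) : T.val (r, c) + r ≤ d := by
  induction r with
  | zero => simpa using (T.mem _ h).2
  | succ r ih =>
    have := T.col r c h
    have := ih (hμ.mem_cells_of_succ h)
    omega

end RevTableau

lemma fSchur_eq_sum (d : ℕ) (μ : Fin d → ℕ) :
    fSchur d μ = ∑ T : RevTableau d μ, ∏ a ∈ cells d μ, factor d (T.val a) a :=
  finsum_eq_sum_of_fintype _

lemma fSchur_zero (μ : Fin 0 → ℕ) : fSchur 0 μ = 1 := by
  have hcells : cells 0 μ = ∅ := eq_empty_of_forall_notMem fun a ha =>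
    (mem_cells_iff.mp ha).1.not_ge (Nat.zero_le _)
  have : Unique (RevTableau 0 μ) :=
    { default := ⟨fun _ => 0, by simp [hcells], fun _ _ => rfl, by simp [hcells], by simp [hcells]⟩
      uniq := fun T => RevTableau.val_injective <| funext fun a => T.zero a (by simp [hcells]) }
  simp [fSchur_eq_sum, hcells]

def shiftX (n : ℕ) : P n →ₐ[ℂ] P (n + 1) := rename (Sum.map Fin.succ id)

lemma shiftX_yI (n : ℕ) (i : ℤ) : shiftX n (yI n i) = yI (n + 1) i := by
  simp [shiftX, yI]

lemma shiftX_ffPow (n : ℕ) (j : Fin n) (k : ℕ) :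
    shiftX n (ffPow n j k) = ffPow (n + 1) j.succ k := by
  simp [shiftX, ffPow, yI]

lemma shiftX_aDet (n : ℕ) (ξ : Fin n → ℕ) :
    shiftX n (aDet n ξ) = det (of fun i j : Fin n => ffPow (n + 1) j.succ (ξ i)) := by
  rw [aDet, AlgHom.map_det]
  congr 1
  ext1 i j
  exact shiftX_ffPow n j (ξ i)

lemma shiftX_factor {n v : ℕ} (hv : 1 ≤ v) (hvn : v ≤ n) (a : ℕ × ℕ) :
    shiftX n (factor n v a) = factor (n + 1) (v + 1) a := by
  rw [factor, factor, map_sub, shiftX_yI, xv, xv, dif_pos (by omega), dif_pos (by omega)]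
  congr 1
  · simp only [shiftX, rename_X, Sum.map_inl]
    congr 2
    ext
    simp only [Fin.val_succ]
    omega
  · push_cast
    ring_nf

lemma rho_succ_castSucc {n : ℕ} (i : Fin n) : rho (n + 1) i.castSucc = rho n i + 1 := by
  simp only [rho, Fin.val_castSucc]
  omega

lemma rho_succ_succ {n : ℕ} (i : Fin n) : rho (n + 1) i.succ = rho n i := by
  simp only [rho, Fin.val_succ]
  omega

lemma rho_succ_last (n : ℕ) : rho (n + 1) (Fin.last n) = 0 := by
  simp [rho]

lemma mem_cells_iff_lt_snoc {n : ℕ} {lam : Fin n → ℕ} (i : Fin (n + 1)) (c : ℕ) :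
    ((i : ℕ), c) ∈ cells n lam ↔ c < (Fin.snoc lam 0 : Fin (n + 1) → ℕ) i := by
  cases i using Fin.lastCases with
  | last => simp [mem_cells_iff]
  | cast i => simpa using mem_cells_fin i c

lemma factor_one {n : ℕ} (i : Fin (n + 1)) (c : ℕ) :
    factor (n + 1) 1 (i, c) = X (Sum.inl 0) - yI (n + 1) (((c + rho (n + 1) i : ℕ) : ℤ) + 1) := by
  simp only [factor, xv, rho]
  rw [dif_pos (by omega)]
  congr 3
  push_cast [Nat.sub_sub, Nat.cast_sub (Nat.le_of_lt_succ i.isLt)]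
  ring

def interlacing (n : ℕ) (μ : Fin (n + 1) → ℕ) : Finset (Fin n → ℕ) :=
  Fintype.piFinset fun i => Icc (μ i.succ) (μ i.castSucc)

lemma mem_interlacing {n : ℕ} {μ : Fin (n + 1) → ℕ} {lam : Fin n → ℕ} :
    lam ∈ interlacing n μ ↔ ∀ i, μ i.succ ≤ lam i ∧ lam i ≤ μ i.castSucc := by
  simp only [interlacing, Fintype.mem_piFinset, mem_Icc]

lemma IsPartitionVec.of_mem_interlacing {n : ℕ} {μ : Fin (n + 1) → ℕ} (hμ : IsPartitionVec μ)
    {lam : Fin n → ℕ} (hlam : lam ∈ interlacing n μ) : IsPartitionVec lam := by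
  intro i j hij
  rcases hij.eq_or_lt with rfl | hij
  · exact le_rfl
  · calc lam j ≤ μ j.castSucc := ((mem_interlacing.mp hlam) j).2
      _ ≤ μ i.succ := hμ _ _ (Fin.le_def.mpr (by simp; omega))
      _ ≤ lam i := ((mem_interlacing.mp hlam) i).1

lemma interlacing_zero (n : ℕ) : interlacing n 0 = {0} := by
  ext lam
  simp [mem_interlacing, funext_iff]

/-- The weight of the horizontal strip `μ/λ` filled with `1`s: row `i` contributes the factors
`x₁ - y_{s+1}` for `s = c + ρ_i` with `λ_i ≤ c < μ_i`, where `λ_d = 0`. -/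
def stripWeight {n : ℕ} (μ : Fin (n + 1) → ℕ) (lam : Fin n → ℕ) : P (n + 1) :=
  ∏ i, ∏ s ∈ Ico ((Fin.snoc lam 0 : Fin (n + 1) → ℕ) i + rho (n + 1) i) (μ i + rho (n + 1) i),
    (X (Sum.inl 0) - yI (n + 1) ((s : ℤ) + 1))

lemma stripWeight_eq {n : ℕ} (μ : Fin (n + 1) → ℕ) (lam : Fin n → ℕ) :
    stripWeight μ lam = ffPow (n + 1) 0 (μ (Fin.last n)) *
      ∏ i : Fin n, ∏ s ∈ Ico (lam i + rho (n + 1) i.castSucc)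
        (μ i.castSucc + rho (n + 1) i.castSucc), (X (Sum.inl 0) - yI (n + 1) ((s : ℤ) + 1)) := by
  rw [stripWeight, Fin.prod_univ_castSucc, mul_comm]
  simp only [Fin.snoc_castSucc, Fin.snoc_last, rho_succ_last, add_zero, ffPow, range_eq_Ico]

lemma stripWeight_zero (n : ℕ) : stripWeight (0 : Fin (n + 1) → ℕ) 0 = 1 := by
  refine prod_eq_one fun i _ => ?_
  rw [show (Fin.snoc (0 : Fin n → ℕ) 0 : Fin (n + 1) → ℕ) i = 0 from by
    cases i using Fin.lastCases <;> simp]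
  simp

lemma aDet_succ_eq_sum {n : ℕ} {μ : Fin (n + 1) → ℕ} (hμ : IsPartitionVec μ) :
    aDet (n + 1) (fun i => μ i + rho (n + 1) i) =
      ∑ lam ∈ interlacing n μ, stripWeight μ lam *
        (∏ j : Fin n, (X (Sum.inl 0) - X (Sum.inl j.succ))) *
          shiftX n (aDet n fun i => lam i + rho n i) := by
  have hξ (i : Fin n) :
      μ i.succ + rho (n + 1) i.succ ≤ μ i.castSucc + rho (n + 1) i.castSucc := by
    have := hμ _ _ (Fin.castSucc_le_succ i)
    rw [rho_succ_succ, rho_succ_castSucc]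
    omega
  have hrow (i : Fin n) (F : ℕ → P (n + 1)) :
      ∑ s ∈ Ico (μ i.succ + rho (n + 1) i.succ) (μ i.castSucc + rho (n + 1) i.castSucc), F s =
        ∑ k ∈ Icc (μ i.succ) (μ i.castSucc), F (k + rho n i) := by
    rw [rho_succ_succ, rho_succ_castSucc, ← add_assoc, add_right_comm, ← sum_Ico_add',
      Ico_add_one_right_eq_Icc]
  conv_lhs => simp only [aDet, ffPow]
  rw [det_falling_eq_mul_det (fun t => yI (n + 1) ((t : ℤ) + 1)) (fun j => X (Sum.inl j)) _ hξ]
  simp only [hrow]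
  rw [det_of_sum_mul_eq_sum_piFinset, mul_sum]
  refine sum_congr rfl fun lam _ => ?_
  rw [stripWeight_eq, shiftX_aDet]
  simp only [ffPow, rho_succ_castSucc, add_assoc, rho_succ_last, add_zero]
  ring

lemma aDet_rho_succ (n : ℕ) :
    aDet (n + 1) (rho (n + 1)) =
      (∏ j : Fin n, (X (Sum.inl 0) - X (Sum.inl j.succ))) * shiftX n (aDet n (rho n)) := by
  simpa [interlacing_zero, stripWeight_zero] using
    aDet_succ_eq_sum (μ := (0 : Fin (n + 1) → ℕ)) fun _ _ _ => le_rfl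

section SchurBranching

variable {n : ℕ} {μ : Fin (n + 1) → ℕ}

namespace RevTableau

def innerShape (T : RevTableau (n + 1) μ) : Fin n → ℕ :=
  fun i => #{c ∈ range (μ i.castSucc) | 2 ≤ T.val (i, c)}

lemma lt_innerShape_iff (T : RevTableau (n + 1) μ) (i : Fin n) (c : ℕ) :
    c < T.innerShape i ↔ c < μ i.castSucc ∧ 2 ≤ T.val (i, c) :=
  lt_card_filter_range_iff (fun _ _ hcc' hc' h2 =>
    h2.trans (T.val_le_of_le ((mem_cells_castSucc i _).2 hc') hcc')) c

lemma mem_cells_innerShape (hμ : IsPartitionVec μ) (T : RevTableau (n + 1) μ) {a : ℕ × ℕ} :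
    a ∈ cells n T.innerShape ↔ a ∈ cells (n + 1) μ ∧ 2 ≤ T.val a := by
  obtain ⟨r, c⟩ := a
  constructor
  · intro h
    obtain ⟨hr, hc⟩ := mem_cells_iff.mp h
    obtain ⟨hcμ, h2⟩ := (T.lt_innerShape_iff ⟨r, hr⟩ c).mp hc
    exact ⟨(mem_cells_castSucc ⟨r, hr⟩ c).2 hcμ, h2⟩
  · rintro ⟨h, h2⟩
    -- the bottom row holds only `1`s
    have hr : r < n := by
      have := T.val_add_le hμ h
      have := (mem_cells_iff.mp h).1
      omega
    exact mem_cells_iff.mpr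
      ⟨hr, (T.lt_innerShape_iff ⟨r, hr⟩ c).mpr ⟨(mem_cells_castSucc ⟨r, hr⟩ c).1 h, h2⟩⟩

lemma innerShape_mem_interlacing (hμ : IsPartitionVec μ) (T : RevTableau (n + 1) μ) :
    T.innerShape ∈ interlacing n μ := by
  refine mem_interlacing.mpr fun i => ⟨?_, ?_⟩
  · by_contra! hlt
    have hcell : ((i : ℕ) + 1, T.innerShape i) ∈ cells (n + 1) μ := by
      simpa using (mem_cells_fin i.succ _).2 hlt
    have := T.col _ _ hcell
    have := (T.mem _ hcell).1
    exact (T.lt_innerShape_iff i _).not.mp (lt_irrefl _)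
      ⟨hlt.trans_le (hμ _ _ (Fin.castSucc_le_succ i)), by omega⟩
  · exact (card_filter_le _ _).trans (card_range _).le

def inner (hμ : IsPartitionVec μ) (T : RevTableau (n + 1) μ) : RevTableau n T.innerShape where
  val a := if a ∈ cells n T.innerShape then T.val a - 1 else 0
  mem a ha := by
    rw [if_pos ha]
    obtain ⟨h, h2⟩ := (T.mem_cells_innerShape hμ).mp ha
    have := (T.mem a h).2
    omega
  zero _ ha := if_neg ha
  row r c h := by
    rw [if_pos h, if_pos (mem_cells_of_le h c.le_succ)]
    have := T.row r c ((T.mem_cells_innerShape hμ).mp h).1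
    omega
  col r c h := by
    obtain ⟨h1, h2⟩ := (T.mem_cells_innerShape hμ).mp h
    have := T.col r c h1
    rw [if_pos h, if_pos ((T.mem_cells_innerShape hμ).mpr ⟨hμ.mem_cells_of_succ h1, by omega⟩)]
    omega

variable {lam : Fin n → ℕ}

lemma cells_subset_of_mem_interlacing (hlam : lam ∈ interlacing n μ) :
    cells n lam ⊆ cells (n + 1) μ := fun a ha => by
  obtain ⟨hr, hc⟩ := mem_cells_iff.mp ha
  exact (mem_cells_castSucc ⟨a.1, hr⟩ a.2).2 (hc.trans_le ((mem_interlacing.mp hlam) ⟨a.1, hr⟩).2)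

def ofInner (hlam : lam ∈ interlacing n μ) (S : RevTableau n lam) : RevTableau (n + 1) μ where
  val a := if a ∈ cells n lam then S.val a + 1 else if a ∈ cells (n + 1) μ then 1 else 0
  mem a ha := by
    split_ifs with h
    · have := (S.mem a h).2
      omega
    · omega
  zero a ha := by
    rw [if_neg fun h => ha (cells_subset_of_mem_interlacing hlam h), if_neg ha]
  row r c h := by
    by_cases h1 : (r, c + 1) ∈ cells n lam
    · rw [if_pos h1, if_pos (mem_cells_of_le h1 c.le_succ)]
      have := S.row r c h1
      omega
    · rw [if_neg h1, if_pos h, if_pos (mem_cells_of_le h c.le_succ)]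
      split_ifs <;> omega
  col r c h := by
    obtain ⟨hr, hc⟩ := mem_cells_iff.mp h
    have h0 : (r, c) ∈ cells n lam := mem_cells_iff.mpr
      ⟨by omega, hc.trans_le ((mem_interlacing.mp hlam) ⟨r, by omega⟩).1⟩
    have := (S.mem _ h0).1
    rw [if_pos h0]
    split_ifs with h1
    · have := S.col r c h1
      omega
    · omega

lemma ofInner_val_of_mem (hlam : lam ∈ interlacing n μ) (S : RevTableau n lam) {a : ℕ × ℕ}
    (ha : a ∈ cells n lam) : (ofInner hlam S).val a = S.val a + 1 :=
  if_pos ha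

lemma ofInner_val_of_mem_sdiff (hlam : lam ∈ interlacing n μ) (S : RevTableau n lam)
    {a : ℕ × ℕ} (ha : a ∈ cells (n + 1) μ) (ha' : a ∉ cells n lam) :
    (ofInner hlam S).val a = 1 := by
  simp [ofInner, ha, ha']

lemma innerShape_ofInner (hlam : lam ∈ interlacing n μ) (S : RevTableau n lam) :
    (ofInner hlam S).innerShape = lam := by
  funext i
  refine eq_of_forall_lt_iff fun c => ?_
  rw [lt_innerShape_iff, ← mem_cells_castSucc, ← mem_cells_fin]
  by_cases hc : ((i : ℕ), c) ∈ cells n lam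
  · simp [hc, cells_subset_of_mem_interlacing hlam hc, ofInner_val_of_mem hlam S hc, (S.mem _ hc).1]
  · by_cases hcμ : ((i : ℕ), c) ∈ cells (n + 1) μ
    · simp [hc, ofInner_val_of_mem_sdiff hlam S hcμ hc]
    · simp [hc, hcμ]

lemma ofInner_inner (hμ : IsPartitionVec μ) (T : RevTableau (n + 1) μ) :
    ofInner (T.innerShape_mem_interlacing hμ) (T.inner hμ) = T := by
  refine val_injective (funext fun a => ?_)
  by_cases ha : a ∈ cells n T.innerShape
  · rw [ofInner_val_of_mem _ _ ha]
    have := ((T.mem_cells_innerShape hμ).mp ha).2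
    simp only [inner, if_pos ha]
    omega
  · by_cases haμ : a ∈ cells (n + 1) μ
    · rw [ofInner_val_of_mem_sdiff _ _ haμ ha]
      have := (T.mem a haμ).1
      have : ¬ 2 ≤ T.val a := fun h2 => ha ((T.mem_cells_innerShape hμ).mpr ⟨haμ, h2⟩)
      omega
    · rw [(ofInner _ _).zero a haμ, T.zero a haμ]

lemma ofInner_injective (hlam : lam ∈ interlacing n μ) :
    Function.Injective (ofInner hlam) := fun S S' h => val_injective <| funext fun a => by
  by_cases ha : a ∈ cells n lam
  · have := congrArg (fun T => T.val a) h
    simp only [ofInner_val_of_mem hlam _ ha] at this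
    omega
  · rw [S.zero a ha, S'.zero a ha]

lemma prod_factor_ofInner (hlam : lam ∈ interlacing n μ) (S : RevTableau n lam) :
    ∏ a ∈ cells (n + 1) μ, factor (n + 1) ((ofInner hlam S).val a) a =
      stripWeight μ lam * shiftX n (∏ a ∈ cells n lam, factor n (S.val a) a) := by
  set F : ℕ × ℕ → P (n + 1) := fun a => factor (n + 1) ((ofInner hlam S).val a) a
  set lam' : Fin (n + 1) → ℕ := Fin.snoc lam 0
  have hle (i : Fin (n + 1)) : lam' i ≤ μ i := by
    cases i using Fin.lastCases with
    | last => simp [lam']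
    | cast i => simpa [lam'] using ((mem_interlacing.mp hlam) i).2
  have hstrip (i : Fin (n + 1)) : ∏ c ∈ Ico (lam' i) (μ i), F (i, c) =
      ∏ s ∈ Ico (lam' i + rho (n + 1) i) (μ i + rho (n + 1) i),
        (X (Sum.inl 0) - yI (n + 1) ((s : ℤ) + 1)) := by
    rw [← prod_Ico_add']
    refine prod_congr rfl fun c hc => ?_
    obtain ⟨hc1, hc2⟩ := mem_Ico.mp hc
    simp only [F, ofInner_val_of_mem_sdiff hlam S ((mem_cells_fin i c).2 hc2)
      ((mem_cells_iff_lt_snoc i c).not.2 (not_lt.2 hc1)), factor_one]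
  have hinner : ∏ i : Fin (n + 1), ∏ c ∈ range (lam' i), F (i, c) =
      ∏ i : Fin n, ∏ c ∈ range (lam i), shiftX n (factor n (S.val (i, c)) (i, c)) := by
    rw [Fin.prod_univ_castSucc]
    simp only [lam', Fin.snoc_last, range_zero, prod_empty, mul_one, Fin.snoc_castSucc]
    refine prod_congr rfl fun i _ => prod_congr rfl fun c hc => ?_
    have hmem := (mem_cells_fin i c).2 (mem_range.mp hc)
    simp only [F, Fin.val_castSucc, ofInner_val_of_mem hlam S hmem]
    exact (shiftX_factor (S.mem _ hmem).1 (S.mem _ hmem).2 _).symm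
  calc ∏ a ∈ cells (n + 1) μ, F a
      = ∏ i : Fin (n + 1), (∏ c ∈ Ico (lam' i) (μ i), F (i, c)) *
          ∏ c ∈ range (lam' i), F (i, c) := by
        rw [prod_cells]
        exact prod_congr rfl fun i _ => by rw [mul_comm, prod_range_mul_prod_Ico _ (hle i)]
    _ = _ := by
        rw [prod_mul_distrib, hinner, prod_cells, map_prod, stripWeight]
        simp only [hstrip, map_prod, lam']

end RevTableau

lemma fSchur_succ_eq_sum (hμ : IsPartitionVec μ) :
    fSchur (n + 1) μ = ∑ lam ∈ interlacing n μ, stripWeight μ lam * shiftX n (fSchur n lam) := by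
  rw [fSchur_eq_sum, ← sum_fiberwise_of_maps_to (g := RevTableau.innerShape)
    fun T _ => T.innerShape_mem_interlacing hμ]
  refine sum_congr rfl fun lam hlam => ?_
  rw [fSchur_eq_sum, map_sum, mul_sum]
  refine (sum_bij (fun S _ => RevTableau.ofInner hlam S)
    (fun S _ => by simp [RevTableau.innerShape_ofInner])
    (fun S _ S' _ h => RevTableau.ofInner_injective hlam h) (fun T hT => ?_)
    fun S _ => (RevTableau.prod_factor_ofInner hlam S).symm).symm
  obtain rfl := (mem_filter.mp hT).2
  exact ⟨T.inner hμ, mem_univ _, T.ofInner_inner hμ⟩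

end SchurBranching

theorem bialternant_general (d : ℕ) (μ : Fin d → ℕ) (hμ : IsPartitionVec μ) :
    fSchur d μ * aDet d (rho d) = aDet d (fun i => μ i + rho d i) := by
  induction d with
  | zero => simp [fSchur_zero, aDet]
  | succ n ih =>
    calc fSchur (n + 1) μ * aDet (n + 1) (rho (n + 1))
        = ∑ lam ∈ interlacing n μ, stripWeight μ lam *
            (∏ j : Fin n, (X (Sum.inl 0) - X (Sum.inl j.succ))) *
              shiftX n (fSchur n lam * aDet n (rho n)) := by
          rw [fSchur_succ_eq_sum hμ, aDet_rho_succ, sum_mul]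
          exact sum_congr rfl fun lam _ => by rw [map_mul]; ring
      _ = aDet (n + 1) (fun i => μ i + rho (n + 1) i) := by
          rw [aDet_succ_eq_sum hμ]
          exact sum_congr rfl fun lam hlam => by rw [ih lam (hμ.of_mem_interlacing hlam)]

/-- Bialternant formula: `s_μ(x|y) = a_{μ+ρ}(x|y) / a_ρ(x|y)`. -/
theorem bialternant (d : ℕ) (hd : 1 ≤ d) (μ : Fin d → ℕ) (hμ : IsPartitionVec μ) :
    fSchur d μ * aDet d (rho d) = aDet d (fun i => μ i + rho d i) :=
  bialternant_general d μ hμ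

end EqLR
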